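/- arXiv:quant-ph/0603066 — 5 statements merged into one kernel-verified Lean document; each statement's English description precedes it below -/
import Mathlib

section
/- Let μ_B = 0.1, μ_a = 2μ_B/(1+a) for a ∈ [0,1], η ∈ (0,1), and I^I(a,η) = (η⁻¹ - 1)/(12/(e^{-μ_a}·μ_a²) - 1). Then I^I(a,η) is strictly decreasing in a on [0,1]. -/
/-!
Write `I(a) = c / (12 / g(μ a) - 1)` with `g m = e^{-m} m²` and `c = η⁻¹ - 1 > 0`. Since
`g' m = e^{-m} m (2 - m)`, `g` is increasing on `[0, 2]`, while `μ a = 0.2 / (1 + a)` decreases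
in `a` and stays in `(0, 0.2]`; there `0 < g < 12`, so the denominator `12 / g - 1` is positive
and increases with `a`.
-/

open Real Set

lemma strictMonoOn_exp_neg_mul_sq : StrictMonoOn (fun m : ℝ => exp (-m) * m ^ 2) (Icc 0 2) := by
  refine strictMonoOn_of_deriv_pos (convex_Icc 0 2) (by fun_prop) fun m hm => ?_
  rw [interior_Icc] at hm
  obtain ⟨hm0, hm2⟩ := hm
  have hderiv : HasDerivAt (fun m : ℝ => exp (-m) * m ^ 2) (exp (-m) * (m * (2 - m))) m := by
    refine ((hasDerivAt_neg m).exp.fun_mul (hasDerivAt_pow 2 m)).congr_deriv ?_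
    push_cast
    ring
  rw [hderiv.deriv]
  have : 0 < 2 - m := by linarith
  positivity

lemma mapsTo_exp_neg_mul_sq : MapsTo (fun m : ℝ => exp (-m) * m ^ 2) (Ioc 0 2) (Ioo 0 12) := by
  intro m ⟨hm0, hm2⟩
  have hexp : exp (-m) ≤ 1 := exp_le_one_iff.2 (by linarith)
  have hsq : m ^ 2 ≤ 4 := by nlinarith
  refine ⟨by positivity, ?_⟩
  show exp (-m) * m ^ 2 < 12
  nlinarith [exp_pos (-m)]

lemma strictMonoOn_div_div_sub_one {c K : ℝ} (hc : 0 < c) :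
    StrictMonoOn (fun x : ℝ => c / (K / x - 1)) (Ioo 0 K) := by
  intro x ⟨hx0, hxK⟩ y ⟨hy0, _⟩ hxy
  have hyK : 1 < K / y := (one_lt_div hy0).2 (by linarith)
  have hKyx : K / y < K / x := div_lt_div_of_pos_left (by linarith) hx0 hxy
  exact div_lt_div_of_pos_left hc (by linarith) (by linarith)

lemma strictAntiOn_div_one_add {b : ℝ} (hb : 0 < b) :
    StrictAntiOn (fun a : ℝ => b / (1 + a)) (Ici 0) := by
  intro x hx y _ hxy
  have hx0 : 0 ≤ x := hx
  exact div_lt_div_of_pos_left hb (by linarith) (by linarith)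

lemma mapsTo_div_one_add {b : ℝ} (hb : 0 < b) :
    MapsTo (fun a : ℝ => b / (1 + a)) (Ici 0) (Ioc 0 b) := by
  intro a (ha : 0 ≤ a)
  exact ⟨by positivity, div_le_self hb.le (by linarith)⟩

/-- With μ_B = 0.1, μ_a = 2μ_B/(1+a), and η ∈ (0,1),
    I^I(a,η) = (η⁻¹-1)/(12/(e^{-μ_a}·μ_a²)-1) is strictly decreasing in a on [0,1]. -/
theorem stmt_6 (μB : ℝ) (hμB : μB = 0.1)
    (μ : ℝ → ℝ) (hμ : ∀ a : ℝ, μ a = 2 * μB / (1 + a))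
    (η : ℝ) (hη : η ∈ Set.Ioo (0:ℝ) 1) :
    StrictAntiOn (fun a : ℝ => (η⁻¹ - 1) / (12 / (Real.exp (-μ a) * (μ a) ^ 2) - 1))
      (Set.Icc (0:ℝ) 1) := by
  have hc : 0 < η⁻¹ - 1 := sub_pos.2 ((one_lt_inv₀ hη.1).2 hη.2)
  obtain rfl : μ = fun a => 0.2 / (1 + a) := funext fun a => by rw [hμ, hμB]; norm_num
  have hb : (0 : ℝ) < 0.2 := by norm_num
  have hμmaps : MapsTo (fun a : ℝ => 0.2 / (1 + a)) (Icc 0 1) (Ioc 0 2) := fun a ha =>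
    Ioc_subset_Ioc_right (by norm_num) (mapsTo_div_one_add hb ha.1)
  have hg : StrictAntiOn (fun a : ℝ => exp (-(0.2 / (1 + a))) * (0.2 / (1 + a)) ^ 2) (Icc 0 1) :=
    (strictMonoOn_exp_neg_mul_sq.mono Ioc_subset_Icc_self).comp_strictAntiOn
      ((strictAntiOn_div_one_add hb).mono Icc_subset_Ici_self) hμmaps
  exact (strictMonoOn_div_div_sub_one hc).comp_strictAntiOn hg
    (mapsTo_exp_neg_mul_sq.comp hμmaps)
end

section
/- Let μ_B = 0.1, a ∈ [0,1], μ_a = 2μ_B/(1+a), μ_a' = dμ_a/da, and for a real parameter L define g(a,L) = (1-L)·(2/(e^{-μ_a}μ_a) - 1) - (a + (1-a)L)·(2μ_a'(1-μ_a))/(e^{-μ_a}μ_a²). Then ∂g/∂L < 0 for all a ∈ [0,1]. -/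
/-- With μ_B = 0.1, μ_a = 2μ_B/(1+a), μ_a' = dμ_a/da, and
    g(a,L) = (1-L)(2/(e^{-μ_a}μ_a) - 1) - (a+(1-a)L)·(2μ_a'(1-μ_a))/(e^{-μ_a}μ_a²),
    the partial derivative of g in L is negative for all a ∈ [0,1]. -/
theorem stmt_7 (μB : ℝ) (hμB : μB = 0.1)
    (μ : ℝ → ℝ) (hμ : ∀ a : ℝ, μ a = 2 * μB / (1 + a))
    (μ' : ℝ → ℝ) (hμ' : ∀ a : ℝ, μ' a = -(2 * μB) / (1 + a) ^ 2)
    (g : ℝ → ℝ → ℝ)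
    (hg : ∀ a L : ℝ, g a L =
      (1 - L) * (2 / (Real.exp (-μ a) * μ a) - 1) -
        (a + (1 - a) * L) * (2 * μ' a * (1 - μ a)) / (Real.exp (-μ a) * (μ a) ^ 2)) :
    ∀ a ∈ Set.Icc (0:ℝ) 1, ∀ L : ℝ, deriv (fun L => g a L) L < 0 := by
  intro a ha L
  obtain ⟨ha0, ha1⟩ := ha
  set C : ℝ := 2 / (Real.exp (-μ a) * μ a) - 1 with hC
  set D : ℝ := (2 * μ' a * (1 - μ a)) / (Real.exp (-μ a) * (μ a) ^ 2) with hD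
  have hfun : (fun L => g a L) = fun L : ℝ => (1 - L) * C - (a + (1 - a) * L) * D := by
    funext x
    rw [hg a x, hC, hD, mul_div_assoc]
  have hda : HasDerivAt (fun L : ℝ => (1 - L) * C - (a + (1 - a) * L) * D)
      ((-1) * C - (1 - a) * D) L := by
    have h1 : HasDerivAt (fun L : ℝ => (1 - L)) (-1) L := by
      simpa using (hasDerivAt_id L).const_sub 1
    have h2 : HasDerivAt (fun L : ℝ => a + (1 - a) * L) (1 - a) L := by
      simpa using ((hasDerivAt_id L).const_mul (1 - a)).const_add a
    exact (h1.mul_const C).sub (h2.mul_const D)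
  rw [hfun, hda.deriv]
  -- Numeric facts
  have h1a : (0:ℝ) < 1 + a := by linarith
  have hm : μ a = 0.2 / (1 + a) := by rw [hμ, hμB]; norm_num
  have hm' : μ' a = -0.2 / (1 + a) ^ 2 := by rw [hμ', hμB]; norm_num
  have hmpos : 0 < μ a := by rw [hm]; positivity
  have hmle : μ a ≤ 0.2 := by
    rw [hm, div_le_iff₀ h1a]; nlinarith
  have hE : 0 < Real.exp (-μ a) := Real.exp_pos _
  have hE1 : Real.exp (-μ a) ≤ 1 := by
    rw [Real.exp_le_one_iff]; linarith
  have hmsq : (0:ℝ) < Real.exp (-μ a) * (μ a) ^ 2 := by positivity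
  have hEm : (0:ℝ) < Real.exp (-μ a) * μ a := by positivity
  -- goal : -1 * C - (1-a) * D < 0
  have hμ'm : μ' a = -(μ a) / (1 + a) := by
    rw [hm', hm]; field_simp
  have hEmne : Real.exp (-μ a) * μ a ≠ 0 := ne_of_gt hEm
  have hane : (1 + a) ≠ 0 := ne_of_gt h1a
  rw [hC, hD, hμ'm]
  rw [show (-1 : ℝ) * (2 / (Real.exp (-μ a) * μ a) - 1) -
      (1 - a) * (2 * (-(μ a) / (1 + a)) * (1 - μ a) / (Real.exp (-μ a) * (μ a) ^ 2)) =
      (Real.exp (-μ a) * μ a * (1 + a) - 2 * (1 + a) + 2 * (1 - a) * (1 - μ a)) /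
        ((1 + a) * (Real.exp (-μ a) * μ a)) by
    field_simp; ring]
  apply div_neg_of_neg_of_pos _ (by positivity)
  nlinarith [mul_le_of_le_one_left hmpos.le hE1, mul_nonneg ha0 hmpos.le,
    mul_nonneg ha0 ha0, hmpos, hmle, ha0, ha1]
end

section
/- Let μ_B = 0.1, a ∈ [0,1], μ_a = 2μ_B/(1+a), μ_a' = dμ_a/da. Then g(a, 1/2) := (1/2)(2/(e^{-μ_a}μ_a) - 1) - (a + (1-a)/2)·(2μ_a'(1-μ_a))/(e^{-μ_a}μ_a²) > 0. -/
/-! Since `μ e^{-μ} < 1` for every `μ`, the first summand of `g(a, 1/2)` is positive. The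
subtracted summand is nonpositive: its weight `a + (1 - a)/2 = (1 + a)/2` is nonnegative,
`μ_a' = -μ_a/(1 + a) < 0`, and `μ_a ≤ 0.2 < 1`. -/

open Real

lemma mul_exp_neg_lt_one (x : ℝ) : x * exp (-x) < 1 := by
  have hx : x < exp x := by linarith [add_one_le_exp x]
  calc x * exp (-x) < exp x * exp (-x) := mul_lt_mul_of_pos_right hx (exp_pos _)
    _ = 1 := by rw [← exp_add, add_neg_cancel, exp_zero]

lemma one_lt_two_div_exp_neg_mul {μ : ℝ} (hμ : 0 < μ) : 1 < 2 / (exp (-μ) * μ) := by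
  have hpos : 0 < exp (-μ) * μ := by positivity
  rw [lt_div_iff₀ hpos]
  linarith [mul_comm μ (exp (-μ)) ▸ mul_exp_neg_lt_one μ]

lemma half_two_div_sub_one_sub_mul_div_pos {μ μ' w : ℝ} (hμ : 0 < μ) (hμ_le : μ ≤ 1)
    (hμ' : μ' ≤ 0) (hw : 0 ≤ w) :
    0 < (1 / 2) * (2 / (exp (-μ) * μ) - 1) -
        w * (2 * μ' * (1 - μ)) / (exp (-μ) * μ ^ 2) := by
  have hfirst : 0 < (1 / 2) * (2 / (exp (-μ) * μ) - 1) := by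
    linarith [one_lt_two_div_exp_neg_mul hμ]
  have hsecond : w * (2 * μ' * (1 - μ)) / (exp (-μ) * μ ^ 2) ≤ 0 := by
    apply div_nonpos_of_nonpos_of_nonneg _ (by positivity)
    exact mul_nonpos_of_nonneg_of_nonpos hw
      (mul_nonpos_of_nonpos_of_nonneg (by linarith) (by linarith))
  linarith

/-- With μ_B = 0.1, μ_a = 2μ_B/(1+a), μ_a' = -2μ_B/(1+a)²,
    g(a,1/2) = (1/2)(2/(e^{-μ_a}μ_a)-1) - (a+(1-a)/2)·(2μ_a'(1-μ_a))/(e^{-μ_a}μ_a²) > 0. -/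
theorem stmt_8 (μB : ℝ) (hμB : μB = 0.1) (a : ℝ) (ha : a ∈ Set.Icc (0:ℝ) 1)
    (μa μa' : ℝ) (hμa : μa = 2 * μB / (1 + a)) (hμa' : μa' = -(2 * μB) / (1 + a) ^ 2) :
    0 < (1 / 2) * (2 / (Real.exp (-μa) * μa) - 1) -
        (a + (1 - a) / 2) * (2 * μa' * (1 - μa)) / (Real.exp (-μa) * μa ^ 2) := by
  obtain ⟨ha0, -⟩ := ha
  subst hμB
  have h1a : 0 < 1 + a := by linarith
  have hμa_pos : 0 < μa := by rw [hμa]; positivity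
  have hμa_le : μa ≤ 1 := by
    rw [hμa, div_le_iff₀ h1a]; linarith
  have hμa'_nonpos : μa' ≤ 0 := by
    rw [hμa']; exact div_nonpos_of_nonpos_of_nonneg (by norm_num) (by positivity)
  exact half_two_div_sub_one_sub_mul_div_pos hμa_pos hμa_le hμa'_nonpos (by linarith)
end

section
/- Let μ_B = 0.1, μ_a = 2μ_B/(1+a), H the binary entropy, I^S_a = 1 - (1-a)·H((√2+1)/(2√2)), f(a) = 2/(e^{-μ_a}μ_a) - 1, and for η ∈ (0,1) let I^S(a,η) = (η⁻¹ - 1)·I^S_a/f(a). Then I^S(a,η) is strictly increasing in a on [0,1]. -/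
lemma hbound : (1:ℝ)/2 ≤ -((Real.sqrt 2 + 1) / (2 * Real.sqrt 2)) * Real.logb 2 ((Real.sqrt 2 + 1) / (2 * Real.sqrt 2)) - (1 - (Real.sqrt 2 + 1) / (2 * Real.sqrt 2)) * Real.logb 2 (1 - (Real.sqrt 2 + 1) / (2 * Real.sqrt 2)) := by
  have hs0 : (0:ℝ) < Real.sqrt 2 := by positivity
  have hs : Real.sqrt 2 ^ 2 = 2 := Real.sq_sqrt (by norm_num)
  have hs1 : 1.414 < Real.sqrt 2 := by nlinarith
  have hs2 : Real.sqrt 2 < 1.415 := by nlinarith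
  set c := (Real.sqrt 2 + 1) / (2 * Real.sqrt 2) with hc
  have hcv : c = (2 + Real.sqrt 2)/4 := by
    rw [hc]; rw [div_eq_div_iff (by positivity) (by norm_num)]; nlinarith
  have hc0 : 0 < c := by rw [hcv]; linarith
  have hc1 : c < 1 := by rw [hcv]; linarith
  have h1c0 : 0 < 1 - c := by linarith
  have lc : Real.log c ≤ c - 1 := Real.log_le_sub_one_of_pos hc0
  have l1c : Real.log (1 - c) ≤ -(1 + Real.log 2) := by
    rw [Real.log_le_iff_le_exp h1c0, Real.exp_neg, Real.exp_add, Real.exp_log (by norm_num : (0:ℝ) < 2)]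
    have he : Real.exp 1 < 2.7182818286 := Real.exp_one_lt_d9
    have hep : (0:ℝ) < Real.exp 1 := Real.exp_pos 1
    have hiE : (Real.exp 1 * 2) * (Real.exp 1 * 2)⁻¹ = 1 := mul_inv_cancel₀ (by positivity)
    have hiEp : (0:ℝ) < (Real.exp 1 * 2)⁻¹ := by positivity
    rw [hcv]
    nlinarith [hiE, mul_lt_mul_of_pos_right he hiEp]
  have hl2 : 0 < Real.log 2 := Real.log_pos (by norm_num)
  have hl2u : Real.log 2 < 0.6931471808 := Real.log_two_lt_d9
  have hl2l : 0.6931471803 < Real.log 2 := Real.log_two_gt_d9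
  have main : Real.log 2 / 2 ≤ -c * Real.log c - (1-c) * Real.log (1-c) := by
    nlinarith [mul_le_mul_of_nonneg_left lc hc0.le,
      mul_le_mul_of_nonneg_left l1c h1c0.le, hs, hcv, hs1, hs2]
  have heq : -c * (Real.log c / Real.log 2) - (1-c) * (Real.log (1-c) / Real.log 2)
      = (-c * Real.log c - (1-c) * Real.log (1-c)) / Real.log 2 := by ring
  rw [Real.logb, Real.logb, heq, le_div_iff₀ hl2]
  linarith
set_option maxHeartbeats 1000000

lemma aux (C h : ℝ) (hC : 0 < C) (hh : 1/2 ≤ h) :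
    StrictMonoOn (fun a : ℝ => C * (1 - (1 - a) * h) /
      (2 / (Real.exp (-(0.2 / (1 + a))) * (0.2 / (1 + a))) - 1)) (Set.Icc (0:ℝ) 1) := by
  have hasd : ∀ x ∈ Set.Icc (0:ℝ) 1,
      HasDerivAt (fun a : ℝ => C * (1 - (1 - a) * h) /
        (2 / (Real.exp (-(0.2 / (1 + a))) * (0.2 / (1 + a))) - 1))
        (C * (h * (2 / (Real.exp (-(0.2/(1+x))) * (0.2/(1+x))) - 1)
           - (1 - (1 - x) * h) * (10 * (1 - 0.2/(1+x)) / Real.exp (-(0.2/(1+x)))))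
          / (2 / (Real.exp (-(0.2/(1+x))) * (0.2/(1+x))) - 1)^2) x := by
    intro x hx
    have ht : (0:ℝ) < 1 + x := by linarith [hx.1]
    have ht' : (1:ℝ) + x ≠ 0 := ne_of_gt ht
    have hm0 : (0:ℝ) < 0.2 / (1 + x) := by positivity
    have hm2 : 0.2 / (1 + x) ≤ 0.2 := by
      rw [div_le_iff₀ ht]; nlinarith [hx.1]
    have hem0 : (0:ℝ) < Real.exp (-(0.2/(1+x))) := Real.exp_pos _
    have hem1 : Real.exp (-(0.2/(1+x))) ≤ 1 := by
      rw [Real.exp_le_one_iff]; linarith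
    have hE0 : (0:ℝ) < Real.exp (-(0.2/(1+x))) * (0.2/(1+x)) := by positivity
    have hE : Real.exp (-(0.2/(1+x))) * (0.2/(1+x)) ≠ 0 := ne_of_gt hE0
    have hEle : Real.exp (-(0.2/(1+x))) * (0.2/(1+x)) ≤ 0.2 := by nlinarith
    have hD0 : (0:ℝ) < 2 / (Real.exp (-(0.2/(1+x))) * (0.2/(1+x))) - 1 := by
      have : (1:ℝ) < 2 / (Real.exp (-(0.2/(1+x))) * (0.2/(1+x))) := by
        rw [lt_div_iff₀ hE0]; nlinarith
      linarith
    have h1 : HasDerivAt (fun a : ℝ => 1 + a) 1 x := (hasDerivAt_id x).const_add 1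
    have h2 : HasDerivAt (fun a : ℝ => (0.2:ℝ) / (1 + a))
        ((0 * (1+x) - 0.2 * 1) / (1+x)^2) x := (hasDerivAt_const x 0.2).div h1 ht'
    have h3 := h2.neg
    have h4 := h3.exp
    have h5 := h4.mul h2
    have h6 := (hasDerivAt_const x 2).div h5 hE
    have h7 := h6.sub_const 1
    have hNd : HasDerivAt (fun a : ℝ => C * (1 - (1 - a) * h)) (C * h) x := by
      have := ((((hasDerivAt_id x).const_sub 1).mul_const h).const_sub 1).const_mul C
      refine this.congr_deriv ?_
      ring
    have hmain := hNd.div h7 (ne_of_gt hD0)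
    refine hmain.congr_deriv ?_
    simp only [Pi.div_apply, Pi.mul_apply, Pi.neg_apply]
    congr 1
    field_simp
    ring
  apply strictMonoOn_of_deriv_pos (convex_Icc 0 1)
  · exact fun x hx => (hasd x hx).continuousAt.continuousWithinAt
  · intro x hx
    rw [interior_Icc] at hx
    rw [(hasd x ⟨hx.1.le, hx.2.le⟩).deriv]
    have ht : (0:ℝ) < 1 + x := by linarith [hx.1]
    have hm0 : (0:ℝ) < 0.2 / (1 + x) := by positivity
    have hm1 : 0.2 / (1 + x) < 0.2 := by
      rw [div_lt_iff₀ ht]; nlinarith [hx.1]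
    have hem0 : (0:ℝ) < Real.exp (-(0.2/(1+x))) := Real.exp_pos _
    have hem1 : Real.exp (-(0.2/(1+x))) ≤ 1 := by
      rw [Real.exp_le_one_iff]; linarith
    set m : ℝ := 0.2 / (1 + x) with hm
    set em : ℝ := Real.exp (-m) with hemdef
    have hmt : m * (1 + x) = 0.2 := by rw [hm]; field_simp
    have hE0 : (0:ℝ) < em * m := by positivity
    have hEle : em * m ≤ 0.2 := by nlinarith
    have hD0 : (0:ℝ) < 2 / (em * m) - 1 := by
      have : (1:ℝ) < 2 / (em * m) := by rw [lt_div_iff₀ hE0]; nlinarith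
      linarith
    apply div_pos
    · apply mul_pos hC
      have key : h * (2 / (em * m) - 1) - (1 - (1 - x) * h) * (10 * (1 - m) / em)
          = (h * (2 - em * m) - 10 * (1 - (1 - x) * h) * (1 - m) * m) / (em * m) := by
        field_simp
      rw [key]
      apply div_pos _ hE0
      have hK : (0:ℝ) ≤ (2 - em * m) + 10 * (1 - x) * (1 - m) * m := by
        have : (0:ℝ) ≤ 10 * (1 - x) * (1 - m) * m := by
          apply mul_nonneg (mul_nonneg (by linarith [hx.2]) (by linarith)) hm0.le
        linarith
      have h5 : (1 - m) * (m * (1 + x)) = (1 - m) * 0.2 := by rw [hmt]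
      nlinarith [mul_nonneg (by linarith : (0:ℝ) ≤ h - 1/2) hK, h5,
        mul_pos hm0 (by linarith : (0:ℝ) < 1 - em / 2)]
    · positivity

/-- With μ_B = 0.1, μ_a = 2μ_B/(1+a), H the binary entropy,
    I^S_a = 1 - (1-a)·H((√2+1)/(2√2)), f(a) = 2/(e^{-μ_a}μ_a) - 1, and η ∈ (0,1),
    I^S(a,η) = (η⁻¹-1)·I^S_a/f(a) is strictly increasing in a on [0,1]. -/
theorem stmt_9 (μB : ℝ) (hμB : μB = 0.1)
    (μ : ℝ → ℝ) (hμ : ∀ a : ℝ, μ a = 2 * μB / (1 + a))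
    (H : ℝ → ℝ)
    (hH : ∀ x : ℝ, H x = -x * Real.logb 2 x - (1 - x) * Real.logb 2 (1 - x))
    (ISa : ℝ → ℝ)
    (hISa : ∀ a : ℝ, ISa a = 1 - (1 - a) * H ((Real.sqrt 2 + 1) / (2 * Real.sqrt 2)))
    (f : ℝ → ℝ) (hf : ∀ a : ℝ, f a = 2 / (Real.exp (-μ a) * μ a) - 1)
    (η : ℝ) (hη : η ∈ Set.Ioo (0:ℝ) 1) :
    StrictMonoOn (fun a : ℝ => (η⁻¹ - 1) * ISa a / f a) (Set.Icc (0:ℝ) 1) := by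
  have hC : 0 < η⁻¹ - 1 := by
    have h1 : η * η⁻¹ = 1 := mul_inv_cancel₀ (ne_of_gt hη.1)
    nlinarith [hη.1, hη.2, inv_pos.mpr hη.1]
  have hhalf : 1/2 ≤ H ((Real.sqrt 2 + 1) / (2 * Real.sqrt 2)) := by
    rw [hH]; exact hbound
  have hfun : (fun a : ℝ => (η⁻¹ - 1) * ISa a / f a)
      = (fun a : ℝ => (η⁻¹ - 1) * (1 - (1 - a) * H ((Real.sqrt 2 + 1) / (2 * Real.sqrt 2))) /
        (2 / (Real.exp (-(0.2 / (1 + a))) * (0.2 / (1 + a))) - 1)) := by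
    funext a
    rw [hISa, hf, hμ, hμB]
    norm_num
  rw [hfun]
  exact aux _ _ hC hhalf
end

section
/- There exist four orthonormal states |Φ₁⟩,...,|Φ₄⟩ in (ℂ²)^⊗3 such that ⟨Ψ_i|Φ_j⟩ = δ_{ij}/√2 for i,j ∈ {1,2,3,4}, where |Ψ₁⟩ = |+x⟩^⊗3, |Ψ₂⟩ = |-x⟩^⊗3, |Ψ₃⟩ = |+z⟩^⊗3, |Ψ₄⟩ = |-z⟩^⊗3. -/
open Complex

/-- The four protocol states |+x⟩,|-x⟩,|+z⟩,|-z⟩ as qubit vectors. -/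
noncomputable def qubitState : Fin 4 → Fin 2 → ℂ
  | 0 => ![(1 / Real.sqrt 2 : ℝ), (1 / Real.sqrt 2 : ℝ)]
  | 1 => ![(1 / Real.sqrt 2 : ℝ), (-(1 / Real.sqrt 2) : ℝ)]
  | 2 => ![1, 0]
  | 3 => ![0, 1]

/-- The three-photon signal states |Ψ_i⟩ = (qubit state i)^⊗3, as functions on
    the computational basis (Fin 3 → Fin 2) of (ℂ²)^⊗3. -/
noncomputable def threeState (i : Fin 4) : (Fin 3 → Fin 2) → ℂ :=
  fun v => ∏ t : Fin 3, qubitState i (v t)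

/-- Inner product on (ℂ²)^⊗3 in the computational basis. -/
noncomputable def inner3 (f g : (Fin 3 → Fin 2) → ℂ) : ℂ :=
  ∑ v : Fin 3 → Fin 2, starRingEnd ℂ (f v) * g v

/-- Rational parts of the coefficient tables of the discrimination states,
    indexed by the three bits of the basis vector. -/
def tbl : Fin 4 → Fin 2 → Fin 2 → Fin 2 → ℝ :=
  ![![![![0, 4], ![1, 4]], ![![1, 1], ![1, 0]]],
    ![![![0, 0], ![-3, 0]], ![![-3, 3], ![3, 0]]],
    ![![![3, 2], ![-1, -1]], ![![-1, -1], ![-1, 0]]],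
    ![![![0, -1], ![-1, 2]], ![![-1, -1], ![-1, 3]]]]

/-- Global multipliers for the four discrimination states. -/
noncomputable def mult : Fin 4 → ℝ :=
  ![1 / 6, 1 / 6, Real.sqrt 2 / 6, Real.sqrt 2 / 6]

/-- The four discrimination states. -/
noncomputable def phiW : Fin 4 → (Fin 3 → Fin 2) → ℂ :=
  fun i v => ((mult i * tbl i (v 0) (v 1) (v 2) : ℝ) : ℂ)

lemma sum_pi3 (F : (Fin 3 → Fin 2) → ℂ) :
    ∑ v : Fin 3 → Fin 2, F v
      = ∑ a : Fin 2, ∑ b : Fin 2, ∑ c : Fin 2, F ![a, b, c] := by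
  rw [← Finset.sum_product', ← Finset.sum_product']
  refine (Fintype.sum_equiv
    ⟨fun v => ((v 0, v 1), v 2), fun p => ![p.1.1, p.1.2, p.2], ?_, ?_⟩ _ _ ?_)
  · intro v; funext t; fin_cases t <;> rfl
  · intro p; rfl
  · intro v; congr 1; funext t; fin_cases t <;> rfl

set_option maxHeartbeats 2000000 in
/-- There exist four orthonormal states Φ₁,…,Φ₄ in (ℂ²)^⊗3 with
    ⟨Ψ_i|Φ_j⟩ = δ_{ij}/√2. -/
theorem stmt_15 :
    ∃ Φ : Fin 4 → (Fin 3 → Fin 2) → ℂ,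
      (∀ i j : Fin 4, inner3 (Φ i) (Φ j) = if i = j then 1 else 0) ∧
      (∀ i j : Fin 4,
        inner3 (threeState i) (Φ j) =
          if i = j then (1 / Real.sqrt 2 : ℝ) else 0) := by
  have h2 : Real.sqrt 2 * Real.sqrt 2 = 2 := Real.mul_self_sqrt (by norm_num)
  have hp2 : Real.sqrt 2 ^ 2 = 2 := by rw [sq]; exact h2
  have h3 : Real.sqrt 2 ^ 3 = 2 * Real.sqrt 2 := by rw [pow_succ, hp2]
  have h4 : Real.sqrt 2 ^ 4 = 4 := by rw [pow_succ, h3]; nlinarith [h2]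
  have h5 : Real.sqrt 2 ^ 5 = 4 * Real.sqrt 2 := by rw [pow_succ, h4]
  have h6 : Real.sqrt 2 ^ 6 = 8 := by rw [pow_succ, h5]; nlinarith [h2]
  have h7 : Real.sqrt 2 ^ 7 = 8 * Real.sqrt 2 := by rw [pow_succ, h6]
  have h8 : Real.sqrt 2 ^ 8 = 16 := by rw [pow_succ, h7]; nlinarith [h2]
  have hne : Real.sqrt 2 ≠ 0 := by positivity
  refine ⟨phiW, ?_, ?_⟩ <;> intro i j <;> fin_cases i <;> fin_cases j <;>
    · rw [inner3, sum_pi3]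
      simp only [phiW, tbl, mult, threeState, qubitState, Fin.sum_univ_two, Fin.reduceFinMk,
        Fin.prod_univ_three, Matrix.cons_val_zero, Matrix.cons_val_one,
        Matrix.head_cons, Matrix.cons_val_two, Matrix.cons_val_three,
        Matrix.tail_cons, map_mul, conj_ofReal, Fin.isValue,
        Fin.reduceEq, reduceIte, if_true]
      norm_cast
      try field_simp
      try ring_nf
      try norm_num
      try linarith [hp2, h3, h4, h5, h6, h7, h8]
      try norm_num [Fin.ext_iff]
      try (have hc : ((Real.sqrt 2 : ℝ) : ℂ) ^ 2 = 2 := by norm_cast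
           linear_combination (3 : ℂ) * hc)
      try (have hm : ((Real.sqrt 2 : ℝ) : ℂ) * ((Real.sqrt 2 : ℝ) : ℂ) = 2 := by exact_mod_cast h2
           exact eq_inv_of_mul_eq_one_left (by linear_combination (1 / 2 : ℂ) * hm))
end
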